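/- Let A, B ∈ ℝ^{n×n}, b ∈ ℝⁿ, θ ∈ [0,1), and let Ω ∈ ℝ^{n×n} be such that Ω + A is invertible. Suppose F(x*) = 0 and ‖(Ω+A)^{-1}‖ < 1/[2‖B‖ + ‖Ω−A‖ + θ(‖Ω+A‖ + 2‖B‖ + ‖Ω−A‖)]. Then any sequence {x^k} in ℝⁿ satisfying the inexact new modified Newton condition ‖((Ω+A)/2)x^{k+1} − [((Ω−A)/2)x^k + B|x^k| + b]‖ ≤ θ‖F(x^k)‖ for all k ≥ 0 converges linearly to x* from any starting point x^0. -/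

import Mathlib

open Matrix Filter

/-- Componentwise absolute value of a vector in Euclidean space. -/
noncomputable def vabs {n : ℕ} (x : EuclideanSpace ℝ (Fin n)) : EuclideanSpace ℝ (Fin n) :=
  WithLp.toLp 2 (fun i => |x i|)

/-- A matrix acting on Euclidean space (so that vector norms are the Euclidean 2-norm). -/
noncomputable def mulV {n : ℕ} (M : Matrix (Fin n) (Fin n) ℝ) (x : EuclideanSpace ℝ (Fin n)) :
    EuclideanSpace ℝ (Fin n) :=
  Matrix.toEuclideanCLM (𝕜 := ℝ) M x

/-- Spectral norm of a real matrix: the operator norm induced by the Euclidean vector norm. -/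
noncomputable def spec {n : ℕ} (M : Matrix (Fin n) (Fin n) ℝ) : ℝ :=
  ‖Matrix.toEuclideanCLM (𝕜 := ℝ) M‖

/-- The GAVE residual function `F(x) = A x − B |x| − b`. -/
noncomputable def gaveF {n : ℕ} (A B : Matrix (Fin n) (Fin n) ℝ)
    (b : EuclideanSpace ℝ (Fin n)) (x : EuclideanSpace ℝ (Fin n)) : EuclideanSpace ℝ (Fin n) :=
  mulV A x - mulV B (vabs x) - b

/-- The AVE residual function `A x − |x| − b` (the GAVE with `B = I`). -/
noncomputable def aveF {n : ℕ} (A : Matrix (Fin n) (Fin n) ℝ)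
    (b : EuclideanSpace ℝ (Fin n)) (x : EuclideanSpace ℝ (Fin n)) : EuclideanSpace ℝ (Fin n) :=
  mulV A x - vabs x - b

/-- A sequence converges linearly to `xs`: the distances to `xs` contract by a fixed
factor `c < 1` at every step, and the sequence tends to `xs`. -/
def ConvergesLinearlyTo {n : ℕ} (x : ℕ → EuclideanSpace ℝ (Fin n))
    (xs : EuclideanSpace ℝ (Fin n)) : Prop :=
  (∃ c : ℝ, 0 ≤ c ∧ c < 1 ∧ ∀ k : ℕ, ‖x (k + 1) - xs‖ ≤ c * ‖x k - xs‖) ∧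
    Tendsto x atTop (nhds xs)

/-!
Subtracting the fixed-point form `(Ω+A) x* = (Ω−A) x* + 2(B|x*| + b)` of `F(x*) = 0` from the
inexact step gives `(Ω+A) e' = (Ω−A) e + 2B(|x| − |x*|) + 2r` for the errors `e = x − x*`,
`e' = x' − x*` and the residual `r`, with `‖r‖ ≤ θ‖F(x) − F(x*)‖`. Since `|·|` is 1-Lipschitz and
`‖A‖ ≤ (‖Ω+A‖ + ‖Ω−A‖)/2`, inverting `Ω+A` yields `‖e'‖ ≤ ‖(Ω+A)⁻¹‖ D ‖e‖`, where `D` is the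
denominator in the hypothesis, so the errors contract geometrically.
-/

section

variable {n : ℕ}

lemma norm_mulV_le (M : Matrix (Fin n) (Fin n) ℝ) (x : EuclideanSpace ℝ (Fin n)) :
    ‖mulV M x‖ ≤ spec M * ‖x‖ :=
  (Matrix.toEuclideanCLM (𝕜 := ℝ) M).le_opNorm x

lemma norm_le_spec_inv_mul_norm_mulV {M : Matrix (Fin n) (Fin n) ℝ} (hM : IsUnit M)
    (x : EuclideanSpace ℝ (Fin n)) : ‖x‖ ≤ spec M⁻¹ * ‖mulV M x‖ := by
  have hx : mulV M⁻¹ (mulV M x) = x := by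
    rw [mulV, mulV, ← mul_apply_eq_comp, ← map_mul,
      nonsing_inv_mul M ((isUnit_iff_isUnit_det M).mp hM), map_one, one_apply_eq_self]
  simpa only [hx] using norm_mulV_le M⁻¹ (mulV M x)

lemma spec_le_half_spec_add_add_spec_sub (A Ω : Matrix (Fin n) (Fin n) ℝ) :
    spec A ≤ (spec (Ω + A) + spec (Ω - A)) / 2 := by
  calc spec A = ‖(2 : ℝ)⁻¹ • (Matrix.toEuclideanCLM (𝕜 := ℝ) (Ω + A) -
        Matrix.toEuclideanCLM (𝕜 := ℝ) (Ω - A))‖ := by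
        rw [spec, ← map_sub, ← map_smul]; congr 2; module
    _ = 2⁻¹ * ‖Matrix.toEuclideanCLM (𝕜 := ℝ) (Ω + A) -
        Matrix.toEuclideanCLM (𝕜 := ℝ) (Ω - A)‖ := by rw [norm_smul]; norm_num
    _ ≤ 2⁻¹ * (spec (Ω + A) + spec (Ω - A)) := by gcongr; exact norm_sub_le _ _
    _ = (spec (Ω + A) + spec (Ω - A)) / 2 := by ring

lemma norm_vabs_sub_vabs_le (x y : EuclideanSpace ℝ (Fin n)) :
    ‖vabs x - vabs y‖ ≤ ‖x - y‖ := by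
  rw [EuclideanSpace.norm_eq, EuclideanSpace.norm_eq]
  gcongr with i
  simp only [vabs, PiLp.sub_apply, Real.norm_eq_abs]
  exact abs_abs_sub_abs_le_abs_sub _ _

lemma norm_mulV_vabs_sub_vabs_le (B : Matrix (Fin n) (Fin n) ℝ) (x y : EuclideanSpace ℝ (Fin n)) :
    ‖mulV B (vabs x - vabs y)‖ ≤ spec B * ‖x - y‖ :=
  (norm_mulV_le B _).trans (mul_le_mul_of_nonneg_left (norm_vabs_sub_vabs_le x y) (norm_nonneg _))

lemma norm_gaveF_sub_gaveF_le (A B : Matrix (Fin n) (Fin n) ℝ)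
    (b x y : EuclideanSpace ℝ (Fin n)) :
    ‖gaveF A B b x - gaveF A B b y‖ ≤ (spec A + spec B) * ‖x - y‖ := by
  have hF : gaveF A B b x - gaveF A B b y = mulV A (x - y) - mulV B (vabs x - vabs y) := by
    simp only [gaveF, mulV, map_sub]; abel
  calc ‖gaveF A B b x - gaveF A B b y‖
      ≤ ‖mulV A (x - y)‖ + ‖mulV B (vabs x - vabs y)‖ := hF ▸ norm_sub_le _ _
    _ ≤ spec A * ‖x - y‖ + spec B * ‖x - y‖ :=
        add_le_add (norm_mulV_le A _) (norm_mulV_vabs_sub_vabs_le B x y)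
    _ = (spec A + spec B) * ‖x - y‖ := by ring

noncomputable def nmnResidual (A B Ω : Matrix (Fin n) (Fin n) ℝ)
    (b y y' : EuclideanSpace ℝ (Fin n)) : EuclideanSpace ℝ (Fin n) :=
  mulV ((2 : ℝ)⁻¹ • (Ω + A)) y' - (mulV ((2 : ℝ)⁻¹ • (Ω - A)) y + mulV B (vabs y) + b)

lemma mulV_add_sub_eq_of_gaveF_eq_zero {A B Ω : Matrix (Fin n) (Fin n) ℝ}
    {b xs : EuclideanSpace ℝ (Fin n)} (hxs : gaveF A B b xs = 0)
    (y y' : EuclideanSpace ℝ (Fin n)) :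
    mulV (Ω + A) (y' - xs) = mulV (Ω - A) (y - xs) + (2 : ℝ) • mulV B (vabs y - vabs xs) +
      (2 : ℝ) • nmnResidual A B Ω b y y' := by
  have hb : b = mulV A xs - mulV B (vabs xs) := (sub_eq_zero.mp hxs).symm
  simp only [nmnResidual, hb, mulV, map_add, map_sub, map_smul, _root_.add_apply,
    _root_.sub_apply, _root_.smul_apply]
  module

lemma norm_mulV_add_sub_le_of_nmnResidual_le {A B Ω : Matrix (Fin n) (Fin n) ℝ}
    {b xs : EuclideanSpace ℝ (Fin n)} {θ : ℝ} (hθ : 0 ≤ θ) (hxs : gaveF A B b xs = 0)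
    {y y' : EuclideanSpace ℝ (Fin n)}
    (hstep : ‖nmnResidual A B Ω b y y'‖ ≤ θ * ‖gaveF A B b y‖) :
    ‖mulV (Ω + A) (y' - xs)‖ ≤
      (2 * spec B + spec (Ω - A) + θ * (spec (Ω + A) + 2 * spec B + spec (Ω - A))) *
        ‖y - xs‖ := by
  have hF : ‖gaveF A B b y‖ ≤ ((spec (Ω + A) + spec (Ω - A)) / 2 + spec B) * ‖y - xs‖ := by
    calc ‖gaveF A B b y‖ = ‖gaveF A B b y - gaveF A B b xs‖ := by rw [hxs, sub_zero]
      _ ≤ (spec A + spec B) * ‖y - xs‖ := norm_gaveF_sub_gaveF_le A B b y xs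
      _ ≤ _ := by gcongr; exact spec_le_half_spec_add_add_spec_sub A Ω
  have hBd := norm_mulV_vabs_sub_vabs_le B y xs
  have hΩA := norm_mulV_le (Ω - A) (y - xs)
  rw [mulV_add_sub_eq_of_gaveF_eq_zero hxs y y']
  calc _ ≤ ‖mulV (Ω - A) (y - xs)‖ + ‖(2 : ℝ) • mulV B (vabs y - vabs xs)‖ +
        ‖(2 : ℝ) • nmnResidual A B Ω b y y'‖ := norm_add₃_le
    _ = ‖mulV (Ω - A) (y - xs)‖ + 2 * ‖mulV B (vabs y - vabs xs)‖ +
        2 * ‖nmnResidual A B Ω b y y'‖ := by rw [norm_smul, norm_smul, Real.norm_two]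
    _ ≤ _ := by nlinarith [mul_le_mul_of_nonneg_left hF hθ]

lemma ConvergesLinearlyTo.of_norm_sub_le {x : ℕ → EuclideanSpace ℝ (Fin n)}
    {xs : EuclideanSpace ℝ (Fin n)} {c : ℝ} (hc0 : 0 ≤ c) (hc1 : c < 1)
    (hx : ∀ k, ‖x (k + 1) - xs‖ ≤ c * ‖x k - xs‖) : ConvergesLinearlyTo x xs := by
  refine ⟨⟨c, hc0, hc1, hx⟩, ?_⟩
  have hgeo : Tendsto (fun k => c ^ k * ‖x 0 - xs‖) atTop (nhds 0) := by
    simpa using (tendsto_pow_atTop_nhds_zero_of_lt_one hc0 hc1).mul_const ‖x 0 - xs‖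
  rw [tendsto_iff_norm_sub_tendsto_zero]
  exact squeeze_zero (fun k => norm_nonneg _)
    (fun k => le_geom (u := fun k => ‖x k - xs‖) hc0 k fun j _ => hx j) hgeo

end

theorem stmt6_general {n : ℕ} (A B Ω : Matrix (Fin n) (Fin n) ℝ)
    (b : EuclideanSpace ℝ (Fin n)) (θ : ℝ) (hθ0 : 0 ≤ θ)
    (hinv : IsUnit (Ω + A))
    (xs : EuclideanSpace ℝ (Fin n)) (hxs : gaveF A B b xs = 0)
    (hcond : spec (Ω + A)⁻¹ <
      1 / (2 * spec B + spec (Ω - A) + θ * (spec (Ω + A) + 2 * spec B + spec (Ω - A))))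
    (x : ℕ → EuclideanSpace ℝ (Fin n))
    (hx : ∀ k : ℕ, ‖mulV ((2 : ℝ)⁻¹ • (Ω + A)) (x (k + 1)) -
        (mulV ((2 : ℝ)⁻¹ • (Ω - A)) (x k) + mulV B (vabs (x k)) + b)‖ ≤
      θ * ‖gaveF A B b (x k)‖) :
    ConvergesLinearlyTo x xs := by
  set D := 2 * spec B + spec (Ω - A) + θ * (spec (Ω + A) + 2 * spec B + spec (Ω - A))
  have hspec : 0 ≤ spec (Ω + A)⁻¹ := norm_nonneg _
  have hD : 0 < D := one_div_pos.mp (hspec.trans_lt hcond)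
  refine ConvergesLinearlyTo.of_norm_sub_le (mul_nonneg hspec hD.le)
    ((lt_div_iff₀ hD).mp hcond) fun k => ?_
  calc ‖x (k + 1) - xs‖ ≤ spec (Ω + A)⁻¹ * ‖mulV (Ω + A) (x (k + 1) - xs)‖ :=
        norm_le_spec_inv_mul_norm_mulV hinv _
    _ ≤ spec (Ω + A)⁻¹ * (D * ‖x k - xs‖) :=
        mul_le_mul_of_nonneg_left (norm_mulV_add_sub_le_of_nmnResidual_le hθ0 hxs (hx k)) hspec
    _ = spec (Ω + A)⁻¹ * D * ‖x k - xs‖ := (mul_assoc _ _ _).symm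

theorem stmt6 {n : ℕ} (A B Ω : Matrix (Fin n) (Fin n) ℝ)
    (b : EuclideanSpace ℝ (Fin n)) (θ : ℝ) (hθ0 : 0 ≤ θ) (hθ1 : θ < 1)
    (hinv : IsUnit (Ω + A))
    (xs : EuclideanSpace ℝ (Fin n)) (hxs : gaveF A B b xs = 0)
    (hcond : spec (Ω + A)⁻¹ <
      1 / (2 * spec B + spec (Ω - A) + θ * (spec (Ω + A) + 2 * spec B + spec (Ω - A))))
    (x : ℕ → EuclideanSpace ℝ (Fin n))
    (hx : ∀ k : ℕ, ‖mulV ((2 : ℝ)⁻¹ • (Ω + A)) (x (k + 1)) -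
        (mulV ((2 : ℝ)⁻¹ • (Ω - A)) (x k) + mulV B (vabs (x k)) + b)‖ ≤
      θ * ‖gaveF A B b (x k)‖) :
    ConvergesLinearlyTo x xs :=
  stmt6_general A B Ω b θ hθ0 hinv xs hxs hcond x hx
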